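/- arXiv:1412.6633 — 3 statements merged into one kernel-verified Lean document; each statement's English description precedes it below -/
import Mathlib

section
/- For α > 0, the function ξ(λ) = (1/π)·arctan(α/λ) on ℝ∖{0} satisfies limsup_{t→0⁺} t·|{λ : |ξ(λ)| > t}| > 0; in particular ξ is not Lebesgue integrable on ℝ. -/
open MeasureTheory Filter Topology Real

private lemma arctan_half_lb {x : ℝ} (hx : 0 < x) (hx1 : x ≤ 1) : x / 2 ≤ arctan x := by
  obtain ⟨c, hc, hc'⟩ := exists_hasDerivAt_eq_slope Real.arctan (fun y => 1 / (1 + y ^ 2)) hx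
    (Real.continuous_arctan.continuousOn) (fun y _ => Real.hasDerivAt_arctan y)
  rw [Real.arctan_zero, sub_zero, sub_zero] at hc'
  have hcd : 0 < 1 + c ^ 2 := by positivity
  have h1 : c ^ 2 ≤ 1 := by nlinarith [hc.1, hc.2]
  have harc : arctan x = x / (1 + c ^ 2) := by
    rw [eq_div_iff hcd.ne']
    field_simp at hc'
    nlinarith [hc']
  rw [harc]
  apply div_le_div_of_nonneg_left hx.le hcd
  nlinarith

private lemma abs_arctan' (y : ℝ) : |Real.arctan y| = Real.arctan |y| := by
  rcases le_or_gt 0 y with h | h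
  · rw [abs_of_nonneg h, abs_of_nonneg]
    simpa using Real.arctan_strictMono.monotone h
  · rw [abs_of_neg h, abs_of_neg, ← Real.arctan_neg]
    simpa using Real.arctan_strictMono h

theorem arctan_ssf_not_weak_zero (α : ℝ) (hα : 0 < α) :
    0 < Filter.limsup
        (fun t : ℝ =>
          t * (volume {l : ℝ | t < |(1 / π) * arctan (α / l)|}).toReal)
        (𝓝[>] (0 : ℝ)) ∧
      ¬ Integrable (fun l : ℝ => (1 / π) * arctan (α / l)) := by
  have hπ : (0 : ℝ) < π := Real.pi_pos
  constructor
  · -- the limsup is in fact a limit, equal to 2α/π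
    -- Step 1: eventual formula for the measure
    have heq : ∀ t ∈ Set.Ioo (0:ℝ) (1/2),
        t * (volume {l : ℝ | t < |(1 / π) * arctan (α / l)|}).toReal
          = 2 * α * (t / Real.tan (π * t)) := by
      intro t ht
      obtain ⟨ht0, ht2⟩ := ht
      have hπt : 0 < π * t := by positivity
      have hπt2 : π * t < π / 2 := by nlinarith
      have htan : 0 < Real.tan (π * t) :=
        Real.tan_pos_of_pos_of_lt_pi_div_two hπt hπt2
      set L : ℝ := α / Real.tan (π * t) with hL
      have hL0 : 0 < L := div_pos hα htan
      have hset : {l : ℝ | t < |(1 / π) * arctan (α / l)|}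
          = Set.Ioo (-L) L \ {0} := by
        ext l
        simp only [Set.mem_setOf_eq, Set.mem_diff, Set.mem_Ioo, Set.mem_singleton_iff]
        have habs : |(1 / π) * arctan (α / l)| = (1 / π) * arctan (α / |l|) := by
          rw [abs_mul, abs_of_pos (by positivity : (0:ℝ) < 1/π), abs_arctan',
            abs_div, abs_of_pos hα]
        rw [habs]
        constructor
        · intro h
          have hl0 : l ≠ 0 := by
            rintro rfl
            simp at h
            linarith
          have hl : 0 < |l| := abs_pos.mpr hl0
          have h1 : π * t < arctan (α / |l|) := by
            rw [show (1/π) * arctan (α / |l|) = arctan (α / |l|) / π by ring,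
              lt_div_iff₀ hπ] at h
            linarith
          have h2 : Real.tan (π * t) < α / |l| := by
            rw [← Real.arctan_tan (x := π * t) (by linarith) hπt2] at h1
            exact Real.arctan_strictMono.lt_iff_lt.mp h1
          have h3 : |l| < L := by
            rw [hL, lt_div_iff₀ htan]
            rw [lt_div_iff₀ hl] at h2
            linarith [h2]
          exact ⟨abs_lt.mp h3, hl0⟩
        · rintro ⟨hmem, hl0⟩
          have hl : 0 < |l| := abs_pos.mpr hl0
          have h3 : |l| < L := abs_lt.mpr hmem
          have h2 : Real.tan (π * t) < α / |l| := by
            rw [lt_div_iff₀ hl]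
            rw [hL, lt_div_iff₀ htan] at h3
            linarith
          have h1 : π * t < arctan (α / |l|) := by
            rw [← Real.arctan_tan (x := π * t) (by linarith) hπt2]
            exact Real.arctan_strictMono h2
          rw [show (1/π) * arctan (α / |l|) = arctan (α / |l|) / π by ring,
            lt_div_iff₀ hπ]
          linarith
      rw [hset]
      have hvol : volume (Set.Ioo (-L) L \ {0}) = ENNReal.ofReal (L - (-L)) := by
        rw [measure_diff_null (measure_singleton 0), Real.volume_Ioo]
      rw [hvol, ENNReal.toReal_ofReal (by linarith)]
      rw [hL]
      field_simp
      ring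
    -- Step 2: the limit of 2α·(t / tan(πt)) is 2α/π
    have hslope : Tendsto (fun x : ℝ => Real.tan x / x) (𝓝[≠] (0:ℝ)) (𝓝 1) := by
      have hd : HasDerivAt Real.tan 1 0 := by
        simpa using Real.hasDerivAt_tan (x := 0) (by norm_num)
      have := hasDerivAt_iff_tendsto_slope.mp hd
      refine this.congr fun x => ?_
      simp [slope_def_field, Real.tan_zero]
    have hmap : Tendsto (fun t : ℝ => π * t) (𝓝[>] (0:ℝ)) (𝓝[≠] (0:ℝ)) := by
      apply tendsto_nhdsWithin_of_tendsto_nhds_of_eventually_within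
      · have : Tendsto (fun t : ℝ => π * t) (𝓝 (0:ℝ)) (𝓝 (π * 0)) :=
          (continuous_const.mul continuous_id).tendsto 0
        simpa using this.mono_left nhdsWithin_le_nhds
      · filter_upwards [self_mem_nhdsWithin] with t (ht : 0 < t)
        have : 0 < π * t := by positivity
        exact this.ne'
    have h1 : Tendsto (fun t : ℝ => Real.tan (π * t) / (π * t)) (𝓝[>] (0:ℝ)) (𝓝 1) :=
      hslope.comp hmap
    have h2 : Tendsto (fun t : ℝ => (Real.tan (π * t) / (π * t))⁻¹) (𝓝[>] (0:ℝ))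
        (𝓝 1) := by simpa using h1.inv₀ one_ne_zero
    have h3 : Tendsto (fun t : ℝ => 2 * α * (t / Real.tan (π * t))) (𝓝[>] (0:ℝ))
        (𝓝 (2 * α * (1/π))) := by
      have h4 := h2.const_mul (2 * α * (1/π))
      simp only [mul_one] at h4
      refine h4.congr fun t => ?_
      rw [inv_div, div_eq_mul_inv, div_eq_mul_inv]
      have hc : π * π⁻¹ = 1 := mul_inv_cancel₀ Real.pi_ne_zero
      linear_combination 2 * α * t * (Real.tan (π * t))⁻¹ * hc
    -- Step 3: conclude
    have hev : (fun t : ℝ =>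
          t * (volume {l : ℝ | t < |(1 / π) * arctan (α / l)|}).toReal)
        =ᶠ[𝓝[>] (0:ℝ)] fun t => 2 * α * (t / Real.tan (π * t)) := by
      filter_upwards [Ioo_mem_nhdsGT_of_mem (by norm_num : (0:ℝ) ∈ Set.Ico 0 (1/2))]
        with t ht using heq t ht
    have hlim : Tendsto (fun t : ℝ =>
          t * (volume {l : ℝ | t < |(1 / π) * arctan (α / l)|}).toReal)
        (𝓝[>] (0:ℝ)) (𝓝 (2 * α * (1/π))) := h3.congr' hev.symm
    rw [hlim.limsup_eq]
    positivity
  · -- non-integrability, by comparison with 1/l on (α, ∞)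
    intro hInt
    have hIO : IntegrableOn (fun l : ℝ => (1 / π) * arctan (α / l)) (Set.Ioi α) :=
      hInt.integrableOn
    have hg : IntegrableOn (fun l : ℝ => (2 * π / α) * ((1 / π) * arctan (α / l)))
        (Set.Ioi α) := hIO.const_mul _
    refine not_IntegrableOn_Ioi_inv (a := α) ?_
    refine hg.mono' measurable_inv.aestronglyMeasurable ?_
    filter_upwards [ae_restrict_mem measurableSet_Ioi] with l hl
    have hαl : α < l := hl
    have hl0 : 0 < l := hα.trans hαl
    have hfrac : 0 < α / l := div_pos hα hl0
    have hfrac1 : α / l ≤ 1 := (div_le_one hl0).mpr hαl.le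
    have hA : α / l / 2 ≤ arctan (α / l) := arctan_half_lb hfrac hfrac1
    have harc_pos : 0 < arctan (α / l) := by
      have := Real.arctan_strictMono hfrac
      simpa using this
    have hRHS : 0 ≤ (2 * π / α) * ((1 / π) * arctan (α / l)) := by positivity
    rw [Real.norm_eq_abs, abs_of_pos (inv_pos.mpr hl0)]
    have hrw : (2 * π / α) * ((1 / π) * arctan (α / l)) = 2 / α * arctan (α / l) := by
      field_simp
    rw [hrw]
    have h5 : 2 / α * (α / l / 2) ≤ 2 / α * arctan (α / l) :=
      mul_le_mul_of_nonneg_left hA (by positivity)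
    have h6 : 2 / α * (α / l / 2) = l⁻¹ := by
      field_simp
    linarith
end

section
/- Let (αₙ)ₙ be a sequence of positive reals with ∑ₙ αₙ < ∞ but ∑ₙ αₙ·ln(1/αₙ) = ∞. Then the function ξ(λ) = (1/π)·∑ₙ arctan(αₙ/λ) satisfies ∫₀¹ ξ(λ) dλ = ∞; i.e., ξ is not locally integrable near 0. -/
open MeasureTheory Filter Topology Real

lemma my_arctan_nonneg {x : ℝ} (hx : 0 ≤ x) : 0 ≤ Real.arctan x := by
  rw [← Real.arctan_zero]
  exact Real.arctan_strictMono.monotone hx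

lemma my_arctan_le_self {x : ℝ} (hx : 0 ≤ x) : Real.arctan x ≤ x := by
  rcases eq_or_lt_of_le hx with h | h
  · simp [← h]
  · have h1 : 0 < Real.arctan x := by
      rw [← Real.arctan_zero]; exact Real.arctan_strictMono h
    have h2 := Real.arctan_lt_pi_div_two x
    have := Real.lt_tan h1 h2
    rw [Real.tan_arctan] at this
    exact this.le

lemma my_arctan_ge_half {x : ℝ} (h0 : 0 ≤ x) (h1 : x ≤ 1) : x / 2 ≤ Real.arctan x := by
  have hmono : MonotoneOn (fun y : ℝ => Real.arctan y - y / 2) (Set.Icc 0 1) := by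
    apply monotoneOn_of_deriv_nonneg (convex_Icc 0 1)
    · exact (Real.continuous_arctan.sub (continuous_id.div_const 2)).continuousOn
    · exact (Real.differentiable_arctan.sub (differentiable_fun_id.div_const 2)).differentiableOn
    · intro y hy
      rw [interior_Icc] at hy
      have hd : deriv (fun y : ℝ => Real.arctan y - y / 2) y
          = 1 / (1 + y ^ 2) - 1 / 2 := by
        rw [deriv_fun_sub (Real.differentiable_arctan y) ((differentiable_fun_id.div_const 2) y),
          Real.deriv_arctan]
        simp
      rw [hd]
      have h2 : 1 + y ^ 2 ≤ 2 := by nlinarith [hy.1.le, hy.2.le]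
      have h3 : (1:ℝ)/2 ≤ 1 / (1 + y^2) :=
        one_div_le_one_div_of_le (by positivity) h2
      linarith
  have := hmono (Set.left_mem_Icc.mpr zero_le_one) ⟨h0, h1⟩ h0
  simp only [Real.arctan_zero] at this
  linarith

theorem ssf_not_locally_integrable (a : ℕ → ℝ) (hpos : ∀ n, 0 < a n)
    (hsum : Summable a)
    (hdiv : ¬ Summable (fun n => a n * Real.log (1 / a n))) :
    ∫⁻ l in Set.Ioc (0 : ℝ) 1,
        ENNReal.ofReal ((1 / π) * ∑' n, arctan (a n / l)) = ⊤ := by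
  set F : ℕ → ℝ → ENNReal := fun n l => ENNReal.ofReal (arctan (a n / l)) with hF
  have hFmeas : ∀ n, Measurable (F n) := fun n =>
    ENNReal.measurable_ofReal.comp
      (Real.measurable_arctan.comp (measurable_const.div measurable_id))
  -- Step 1: pointwise rewriting on Ioc 0 1
  have hstep1 : ∫⁻ l in Set.Ioc (0 : ℝ) 1,
      ENNReal.ofReal ((1 / π) * ∑' n, arctan (a n / l))
      = ∫⁻ l in Set.Ioc (0 : ℝ) 1, ENNReal.ofReal (1/π) * ∑' n, F n l := by
    apply setLIntegral_congr_fun measurableSet_Ioc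
    intro l hl
    dsimp only
    have hl0 : 0 < l := hl.1
    have hsummable : Summable (fun n => arctan (a n / l)) := by
      apply Summable.of_nonneg_of_le
        (fun n => my_arctan_nonneg (div_nonneg (hpos n).le hl0.le))
        (fun n => my_arctan_le_self (div_nonneg (hpos n).le hl0.le))
      exact hsum.div_const l
    rw [ENNReal.ofReal_mul (by positivity),
      ENNReal.ofReal_tsum_of_nonneg (fun n => my_arctan_nonneg (div_nonneg (hpos n).le hl0.le)) hsummable]
  rw [hstep1, lintegral_const_mul' _ _ ENNReal.ofReal_ne_top,
    lintegral_tsum (fun n => (hFmeas n).aemeasurable)]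
  -- Step 3: the sum of integrals is infinite
  set f : ℕ → ℝ := fun n => if a n ≤ 1 then (a n / 2) * Real.log (1 / a n) else 0 with hf
  have hfnonneg : ∀ n, 0 ≤ f n := by
    intro n
    rw [hf]
    dsimp only
    split_ifs with h
    · have : (1:ℝ) ≤ 1 / a n := (le_div_iff₀ (hpos n)).mpr (by linarith)
      have := Real.log_nonneg this
      have := (hpos n).le
      positivity
    · exact le_refl 0
  -- lower bound for each integral
  have hlb : ∀ n, ENNReal.ofReal (f n) ≤ ∫⁻ l in Set.Ioc (0:ℝ) 1, F n l := by
    intro n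
    rw [hf]
    dsimp only
    split_ifs with h
    · -- a n ≤ 1 case
      have han : 0 < a n := hpos n
      calc ENNReal.ofReal (a n / 2 * Real.log (1 / a n))
          = ∫⁻ l in Set.Ioc (a n) 1, ENNReal.ofReal ((a n / 2) * (1 / l)) := by
            have hint : IntegrableOn (fun l : ℝ => (a n / 2) * (1 / l)) (Set.Ioc (a n) 1) := by
              apply (ContinuousOn.integrableOn_Icc ?_).mono_set Set.Ioc_subset_Icc_self
              apply ContinuousOn.mul continuousOn_const
              apply ContinuousOn.div continuousOn_const continuousOn_id
              intro x hx; exact (lt_of_lt_of_le han hx.1).ne'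
            rw [← MeasureTheory.ofReal_integral_eq_lintegral_ofReal hint ?_]
            · congr 1
              rw [← intervalIntegral.integral_of_le h, intervalIntegral.integral_const_mul,
                integral_one_div (by
                  intro hmem
                  rw [Set.uIcc_of_le h] at hmem
                  exact absurd hmem.1 (not_le.mpr han))]
            · rw [Filter.EventuallyLE, ae_restrict_iff' measurableSet_Ioc]
              filter_upwards with l hl
              have : 0 < l := lt_of_lt_of_le han hl.1.le
              positivity
        _ ≤ ∫⁻ l in Set.Ioc (a n) 1, F n l := by
            apply setLIntegral_mono (hFmeas n)
            intro l hl
            have hl0 : 0 < l := lt_of_lt_of_le han hl.1.le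
            apply ENNReal.ofReal_le_ofReal
            have h1 : a n / l ≤ 1 := (div_le_one hl0).mpr hl.1.le
            have h0 : 0 ≤ a n / l := by positivity
            have := my_arctan_ge_half h0 h1
            calc a n / 2 * (1 / l) = (a n / l) / 2 := by ring
              _ ≤ arctan (a n / l) := this
        _ ≤ ∫⁻ l in Set.Ioc (0:ℝ) 1, F n l :=
            lintegral_mono_set (Set.Ioc_subset_Ioc_left han.le)
    · simp
  -- the sum over f diverges in ℝ≥0∞
  have hftop : ∑' n, ENNReal.ofReal (f n) = ⊤ := by
    by_contra hne
    have hsummf : Summable f := by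
      have := ENNReal.summable_toReal hne
      apply this.congr
      intro n
      exact ENNReal.toReal_ofReal (hfnonneg n)
    -- a n → 0 so eventually a n ≤ 1
    have htend : Tendsto a atTop (𝓝 0) := hsum.tendsto_atTop_zero
    obtain ⟨N, hN⟩ := (eventually_atTop.mp (htend.eventually (eventually_le_nhds
      (by norm_num : (0:ℝ) < 1))))
    apply hdiv
    rw [← summable_nat_add_iff N]
    have : Summable (fun n => 2 * f (n + N)) :=
      ((summable_nat_add_iff N).mpr hsummf).mul_left 2
    apply this.congr
    intro n
    rw [hf]
    dsimp only
    rw [if_pos (hN (n + N) (Nat.le_add_left N n))]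
    ring
  have hsumtop : ∑' n, ∫⁻ l in Set.Ioc (0:ℝ) 1, F n l = ⊤ :=
    top_le_iff.mp (hftop ▸ ENNReal.tsum_le_tsum hlb)
  rw [hsumtop, ENNReal.mul_top]
  rw [Ne, ENNReal.ofReal_eq_zero, not_le]
  positivity
end

section
/- Let (αₙ)ₙ be a sequence of positive reals with ∑ₙ αₙ < ∞. Then ζ(λ) = ∑ₙ log√(1 + αₙ²/λ²) is Lebesgue integrable on ℝ, with ∫_ℝ ζ(λ) dλ = π·∑ₙ αₙ. -/
open MeasureTheory Real Filter Set Topology ENNReal NNReal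

section Aux

-- limit at infinity of x * log(1+α²/x²)
lemma lim_top {α : ℝ} (hα : 0 < α) :
    Tendsto (fun x : ℝ => x * Real.log (1 + α^2/x^2)) atTop (𝓝 0) := by
  have h0 : Tendsto (fun x : ℝ => α^2/x) atTop (𝓝 0) :=
    tendsto_const_nhds.div_atTop tendsto_id
  refine squeeze_zero' ?_ ?_ h0
  · filter_upwards [eventually_gt_atTop (0:ℝ)] with x hx
    have : (1:ℝ) ≤ 1 + α^2/x^2 := le_add_of_nonneg_right (by positivity)
    have h2 := Real.log_nonneg this
    exact mul_nonneg hx.le h2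
  · filter_upwards [eventually_gt_atTop (0:ℝ)] with x hx
    have h1 : (0:ℝ) < 1 + α^2/x^2 := by positivity
    have h2 : Real.log (1 + α^2/x^2) ≤ α^2/x^2 := by
      have := Real.log_le_sub_one_of_pos h1
      linarith
    calc x * Real.log (1 + α^2/x^2) ≤ x * (α^2/x^2) := by
          exact mul_le_mul_of_nonneg_left h2 hx.le
      _ = α^2/x := by field_simp

lemma lim_zero {α : ℝ} (hα : 0 < α) :
    Tendsto (fun x : ℝ => x * Real.log (1 + α^2/x^2)) (𝓝[>] 0) (𝓝 0) := by
  have heq : ∀ x ∈ Ioi (0:ℝ), x * Real.log (1 + α^2/x^2)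
      = x * Real.log (x^2 + α^2) - 2 * (Real.log x * x) := by
    intro x hx
    have hx0 : (x:ℝ) ≠ 0 := (mem_Ioi.1 hx).ne'
    have h1 : (1:ℝ) + α^2/x^2 = (x^2+α^2)/x^2 := by field_simp
    rw [h1, Real.log_div (by positivity : (0:ℝ) < x^2+α^2).ne' (by positivity : (0:ℝ) < x^2).ne', Real.log_pow]
    push_cast
    ring_nf
  have h1 : Tendsto (fun x : ℝ => x * Real.log (x^2 + α^2)) (𝓝[>] 0) (𝓝 0) := by
    have : ContinuousAt (fun x : ℝ => x * Real.log (x^2 + α^2)) 0 := by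
      have : ContinuousAt (fun x : ℝ => Real.log (x^2 + α^2)) 0 := by
        apply Real.continuousAt_log (by positivity) |>.comp
        fun_prop
      exact (continuousAt_id.mul this)
    simpa using this.continuousWithinAt.tendsto
  have h2 : Tendsto (fun x : ℝ => Real.log x * x) (𝓝[>] 0) (𝓝 0) := by
    have := tendsto_log_mul_rpow_nhdsGT_zero one_pos
    simpa using this
  have := h1.sub ((h2.const_mul 2))
  rw [show (0:ℝ) - 2*0 = 0 by ring] at this
  exact this.congr' (by filter_upwards [self_mem_nhdsWithin] with x hx using (heq x hx).symm)


lemma key_deriv {α : ℝ} (hα : 0 < α) {x : ℝ} (hx : 0 < x) :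
    HasDerivAt (fun x : ℝ => x * Real.log (1 + α^2/x^2) + 2*α*Real.arctan (x/α))
      (Real.log (1 + α^2/x^2)) x := by
  have hx0 : x ≠ 0 := hx.ne'
  have hx2 : x^2 ≠ 0 := pow_ne_zero 2 hx0
  have hu : (0:ℝ) < 1 + α^2/x^2 := by positivity
  have h1 : HasDerivAt (fun x : ℝ => 1 + α^2/x^2)
      ((0 * x^2 - α^2 * (2*x^1))/(x^2)^2) x := by
    exact ((hasDerivAt_const x (α^2)).div (hasDerivAt_pow 2 x) hx2).const_add 1
  have h2 : HasDerivAt (fun x : ℝ => Real.log (1 + α^2/x^2))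
      ((0 * x^2 - α^2 * (2*x^1))/(x^2)^2 / (1 + α^2/x^2)) x := h1.log hu.ne'
  have h3 : HasDerivAt (fun x : ℝ => x * Real.log (1 + α^2/x^2))
      (1 * Real.log (1 + α^2/x^2) +
        x * ((0 * x^2 - α^2 * (2*x^1))/(x^2)^2 / (1 + α^2/x^2))) x :=
    (hasDerivAt_id x).mul h2
  have h4 : HasDerivAt (fun x : ℝ => 2*α*Real.arctan (x/α))
      (2*α*(1 / (1 + (x/α)^2) * (1/α))) x := by
    have := (Real.hasDerivAt_arctan (x/α)).comp x
      ((hasDerivAt_id x).div_const α)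
    simpa using this.const_mul (2*α)
  have := h3.add h4
  refine this.congr_deriv ?_
  have hxα : x^2 + α^2 ≠ 0 := by positivity
  field_simp
  ring

lemma F_lims {α : ℝ} (hα : 0 < α) :
    ContinuousWithinAt (fun x : ℝ => x * Real.log (1 + α^2/x^2) + 2*α*Real.arctan (x/α))
      (Ici 0) 0 ∧
    Tendsto (fun x : ℝ => x * Real.log (1 + α^2/x^2) + 2*α*Real.arctan (x/α))
      atTop (𝓝 (π * α)) := by
  constructor
  · rw [← continuousWithinAt_Ioi_iff_Ici]
    have h2 : Tendsto (fun x : ℝ => 2*α*Real.arctan (x/α)) (𝓝[>] 0) (𝓝 0) := by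
      have : ContinuousAt (fun x : ℝ => 2*α*Real.arctan (x/α)) 0 := by
        exact (Real.continuous_arctan.comp (continuous_id.div_const α)).continuousAt.const_mul _
      have h := (this.continuousWithinAt (s := Ioi 0)).tendsto
      simpa using h
    have := (lim_zero hα).add h2
    rw [add_zero] at this
    unfold ContinuousWithinAt
    convert this using 2
    simp
  · have harct : Tendsto (fun x : ℝ => 2*α*Real.arctan (x/α)) atTop (𝓝 (2*α*(π/2))) := by
      have hdiv : Tendsto (fun x : ℝ => x/α) atTop atTop :=
        tendsto_id.atTop_div_const hα
      exact ((Real.tendsto_arctan_atTop.mono_right nhdsWithin_le_nhds).comp hdiv).const_mul _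
    have := (lim_top hα).add harct
    rw [zero_add] at this
    convert this using 2
    ring

lemma integral_Ioi_log {α : ℝ} (hα : 0 < α) :
    IntegrableOn (fun x : ℝ => Real.log (1 + α^2/x^2)) (Ioi 0) ∧
    ∫ x in Ioi (0:ℝ), Real.log (1 + α^2/x^2) = π * α := by
  obtain ⟨hc, ht⟩ := F_lims hα
  have hpos : ∀ x ∈ Ioi (0:ℝ), 0 ≤ Real.log (1 + α^2/x^2) := by
    intro x hx
    have hx' : (0:ℝ) < x := hx
    exact Real.log_nonneg (le_add_of_nonneg_right (by positivity))
  have hderiv : ∀ x ∈ Ioi (0:ℝ),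
      HasDerivAt (fun x : ℝ => x * Real.log (1 + α^2/x^2) + 2*α*Real.arctan (x/α))
        (Real.log (1 + α^2/x^2)) x := fun x hx => key_deriv hα hx
  refine ⟨integrableOn_Ioi_deriv_of_nonneg hc hderiv hpos ht, ?_⟩
  rw [integral_Ioi_of_hasDerivAt_of_nonneg hc hderiv hpos ht]
  simp

lemma single {α : ℝ} (hα : 0 < α) :
    Integrable (fun x : ℝ => Real.log (Real.sqrt (1 + α^2/x^2))) ∧
    ∫ x : ℝ, Real.log (Real.sqrt (1 + α^2/x^2)) = π * α := by
  have hf : (fun x : ℝ => Real.log (Real.sqrt (1 + α^2/x^2)))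
      = fun x : ℝ => Real.log (1 + α^2/x^2) / 2 :=
    funext fun x => Real.log_sqrt (by positivity)
  obtain ⟨hIoi, hval⟩ := integral_Ioi_log hα
  have hIio : IntegrableOn (fun x : ℝ => Real.log (1 + α^2/x^2)) (Iio 0) := by
    rw [← (Measure.measurePreserving_neg (volume : Measure ℝ)).integrableOn_comp_preimage
        (Homeomorph.neg ℝ).measurableEmbedding]
    simp only [Function.comp_def, neg_preimage, neg_Iio, neg_zero, neg_sq]
    exact hIoi
  have hInt : Integrable (fun x : ℝ => Real.log (1 + α^2/x^2)) := by
    have h1 : IntegrableOn (fun x : ℝ => Real.log (1 + α^2/x^2)) (Iio 0 ∪ Ioi 0) :=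
      hIio.union hIoi
    have h2 : (Iio (0:ℝ) ∪ Ioi 0 : Set ℝ) =ᵐ[volume] (univ : Set ℝ) := by
      rw [ae_eq_univ, Set.Iio_union_Ioi, compl_compl]
      exact measure_singleton 0
    rw [← integrableOn_univ]
    exact h1.congr_set_ae h2.symm
  have habs : ∫ x : ℝ, Real.log (1 + α^2/x^2) = 2 * (π * α) := by
    have h3 : ∫ x : ℝ, Real.log (1 + α^2/|x|^2) = 2 * ∫ x in Ioi (0:ℝ),
        Real.log (1 + α^2/x^2) := integral_comp_abs (f := fun x => Real.log (1 + α^2/x^2))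
    simp only [sq_abs] at h3
    rw [h3, hval]
  refine ⟨?_, ?_⟩
  · rw [hf]; exact hInt.div_const 2
  · rw [hf, integral_div, habs]; ring

end Aux

theorem zeta_series_integrable (a : ℕ → ℝ) (hpos : ∀ n, 0 < a n)
    (hsum : Summable a) :
    Integrable (fun l : ℝ => ∑' n, Real.log (Real.sqrt (1 + a n ^ 2 / l ^ 2))) ∧
      ∫ l : ℝ, ∑' n, Real.log (Real.sqrt (1 + a n ^ 2 / l ^ 2)) = π * ∑' n, a n := by
  set f : ℕ → ℝ → ℝ := fun n l => Real.log (Real.sqrt (1 + a n ^ 2 / l ^ 2)) with hf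
  have hint : ∀ n, Integrable (f n) := fun n => (single (hpos n)).1
  have hval : ∀ n, ∫ l : ℝ, f n l = π * a n := fun n => (single (hpos n)).2
  have hnn : ∀ n l, 0 ≤ f n l := by
    intro n l
    apply Real.log_nonneg
    rw [Real.one_le_sqrt]
    exact le_add_of_nonneg_right (by positivity)
  have hmeas : ∀ n, Measurable (f n) := fun n =>
    Real.measurable_log.comp (Real.continuous_sqrt.measurable.comp
      (measurable_const.add (measurable_const.div ((measurable_id.pow_const 2)))))
  -- summability of a n ^ 2
  have hsq : Summable (fun n => a n ^ 2) := by
    have h0 : Tendsto a atTop (𝓝 0) := hsum.tendsto_atTop_zero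
    have hev : ∀ᶠ n in atTop, ‖a n ^ 2‖ ≤ 1 * ‖a n‖ := by
      filter_upwards [h0.eventually (eventually_le_nhds one_pos)] with n hn
      have := (hpos n).le
      rw [norm_of_nonneg (by positivity), norm_of_nonneg this, one_mul, pow_two]
      exact mul_le_of_le_one_left this hn
    exact summable_of_isBigO_nat hsum (Asymptotics.IsBigO.of_bound 1 hev)
  -- pointwise summability
  have hsummable : ∀ l : ℝ, Summable fun n => f n l := by
    intro l
    rcases eq_or_ne l 0 with rfl | hl
    · have : (fun n => f n 0) = fun _ => (0:ℝ) := by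
        funext n; simp [hf]
      rw [this]; exact summable_zero
    · refine Summable.of_nonneg_of_le (fun n => hnn n l) (fun n => ?_)
        (hsq.mul_right (1/l^2/2))
      have hl2 : (0:ℝ) < l^2 := by positivity
      have ht : (0:ℝ) < 1 + a n ^2 / l^2 := by positivity
      show Real.log (Real.sqrt (1 + a n ^ 2 / l ^ 2)) ≤ a n ^ 2 * (1/l^2/2)
      rw [Real.log_sqrt ht.le]
      have := Real.log_le_sub_one_of_pos ht
      calc Real.log (1 + a n ^2/l^2) / 2 ≤ (a n ^2/l^2)/2 := by linarith
        _ = a n ^2 * (1/l^2/2) := by ring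
  have hgmeas : Measurable (fun l : ℝ => ∑' n, f n l) := by
    apply measurable_of_tendsto_metrizable
      (f := fun k (l : ℝ) => ∑ n ∈ Finset.range k, f n l)
      (fun k => Finset.measurable_sum _ (fun n _ => hmeas n))
    rw [tendsto_pi_nhds]
    intro l
    exact (hsummable l).hasSum.tendsto_sum_nat
  -- finite integral via lintegral
  have hlint : ∫⁻ l : ℝ, ENNReal.ofReal (∑' n, f n l) = ENNReal.ofReal (π * ∑' n, a n) := by
    have h1 : ∀ l : ℝ, ENNReal.ofReal (∑' n, f n l) = ∑' n, ENNReal.ofReal (f n l) :=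
      fun l => ENNReal.ofReal_tsum_of_nonneg (fun n => hnn n l) (hsummable l)
    simp_rw [h1]
    rw [lintegral_tsum (fun n => ((hmeas n).ennreal_ofReal).aemeasurable)]
    have h2 : ∀ n, ∫⁻ l : ℝ, ENNReal.ofReal (f n l) = ENNReal.ofReal (π * a n) := by
      intro n
      rw [← ofReal_integral_eq_lintegral_ofReal (hint n)
        (Eventually.of_forall (fun l => hnn n l)), hval n]
    simp_rw [h2]
    rw [← ENNReal.ofReal_tsum_of_nonneg (fun n => mul_nonneg Real.pi_pos.le (hpos n).le) (hsum.mul_left π)]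
    congr 1
    exact tsum_mul_left
  have hInt : Integrable (fun l : ℝ => ∑' n, f n l) := by
    refine ⟨hgmeas.aestronglyMeasurable, ?_⟩
    show (∫⁻ l : ℝ, (‖(∑' n, f n l)‖₊ : ℝ≥0∞)) < ⊤
    have : ∀ l : ℝ, (‖(∑' n, f n l)‖₊ : ℝ≥0∞) = ENNReal.ofReal (∑' n, f n l) := by
      intro l
      exact (Real.enorm_eq_ofReal (tsum_nonneg (fun n => hnn n l)))
    simp_rw [this, hlint]
    exact ENNReal.ofReal_lt_top
  refine ⟨hInt, ?_⟩
  rw [← integral_tsum_of_summable_integral_norm hint ?_]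
  · have : ∀ n, ∫ l : ℝ, f n l = π * a n := hval
    simp_rw [this]
    exact tsum_mul_left
  · have : ∀ n, (∫ l : ℝ, ‖f n l‖) = π * a n := by
      intro n
      rw [← hval n]
      exact integral_congr_ae (Eventually.of_forall fun l => norm_of_nonneg (hnn n l))
    simp_rw [this]
    exact hsum.mul_left π
end
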